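/- arXiv:2405.17536 — 6 statements merged into one kernel-verified Lean document; each statement's English description precedes it below -/
import Mathlib

section
/- Let sum_pd(n) = Σ_{i=0}^{n} d_i be the running sum of the period-doubling sequence. Then for every natural number r, sum_pd((4^{r+1} - 1)/3) = (2·4^{r+1} + 3r + 1)/9. -/
theorem sum_period_doubling (d : ℕ → ℕ)
    (h2 : ∀ n, d (2*n) = 1)
    (h41 : ∀ n, d (4*n + 1) = 0)
    (h43 : ∀ n, d (4*n + 3) = d n)
    (r : ℕ) :
    9 * (∑ i ∈ Finset.range ((4^(r+1) - 1)/3 + 1), d i) = 2 * 4^(r+1) + 3*r + 1 := by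
  have key : ∀ m, ∑ i ∈ Finset.range (4*m+2), d i
      = 2*m+1 + ∑ i ∈ Finset.range m, d i := by
    intro m
    induction m with
    | zero =>
      have e : 4*0+2 = 0+1+1 := by omega
      rw [e, Finset.sum_range_succ, Finset.sum_range_succ]
      have a1 : d 0 = 1 := by have := h2 0; simpa using this
      have a2 : d (0+1) = 0 := by have := h41 0; simpa using this
      simp [a1, a2]
    | succ m ih =>
      have e : 4*(m+1)+2 = 4*m+2+1+1+1+1 := by omega
      rw [e, Finset.sum_range_succ, Finset.sum_range_succ, Finset.sum_range_succ,
        Finset.sum_range_succ, ih, Finset.sum_range_succ]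
      have a1 : d (4*m+2) = 1 := by rw [show 4*m+2 = 2*(2*m+1) by ring]; exact h2 _
      have a2 : d (4*m+2+1) = d m := by rw [show 4*m+2+1 = 4*m+3 by ring]; exact h43 m
      have a3 : d (4*m+2+1+1) = 1 := by
        rw [show 4*m+2+1+1 = 2*(2*m+2) by ring]; exact h2 _
      have a4 : d (4*m+2+1+1+1) = 0 := by
        rw [show 4*m+2+1+1+1 = 4*(m+1)+1 by ring]; exact h41 _
      rw [a1, a2, a3, a4]
      omega
  have div3 : ∀ s : ℕ, 3 * ((4^(s+1) - 1)/3) + 1 = 4^(s+1) := by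
    intro s
    have hm : 4^(s+1) % 3 = 1 := by
      rw [Nat.pow_mod]; simp
    have hp : (1:ℕ) ≤ 4^(s+1) := Nat.one_le_pow _ _ (by norm_num)
    omega
  induction r with
  | zero =>
    have e : (4^(0+1) - 1)/3 + 1 = 0+1+1 := by norm_num
    rw [e, Finset.sum_range_succ, Finset.sum_range_succ]
    have a1 : d 0 = 1 := by have := h2 0; simpa using this
    have a2 : d (0+1) = 0 := by have := h41 0; simpa using this
    simp [a1, a2]
  | succ n ih =>
    have hN : 3 * ((4^(n+1) - 1)/3) + 1 = 4^(n+1) := div3 n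
    set N := (4^(n+1) - 1)/3 with hNdef
    have h4 : (4:ℕ)^(n+1+1) = 4 * 4^(n+1) := by ring
    have hN' : (4^(n+1+1) - 1)/3 = 4*N+1 := by
      have := div3 (n+1)
      omega
    have e : (4*N+1)+1 = 4*N+2 := by omega
    rw [hN', e, key N]
    have hd : (4:ℕ) ∣ 4^(n+1) := dvd_pow_self 4 (Nat.succ_ne_zero n)
    obtain ⟨k, hk⟩ : ∃ k, N = 4*k+1 := ⟨N/4, by omega⟩
    have hdN : d N = 0 := by rw [hk]; exact h41 k
    rw [Finset.sum_range_succ, hdN] at ih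
    omega
end

section
/- Let sum_sc(n) = Σ_{i=0}^{n} s_i be the running sum of Stewart's choral sequence. Then for every natural number r ≥ 1, sum_sc((3^r - 1)/2) = (3^r - 2r - 1)/4. -/
theorem sum_stewart_choral (s : ℕ → ℕ)
    (h0 : ∀ n, s (3*n) = 0)
    (h2 : ∀ n, s (3*n + 2) = 1)
    (h1 : ∀ n, s (3*n + 1) = s n)
    (r : ℕ) (hr : 1 ≤ r) :
    4 * (∑ i ∈ Finset.range ((3^r - 1)/2 + 1), s i) + 2*r + 1 = 3^r := by
  have key : ∀ m, ∑ i ∈ Finset.range (3*m + 2), s i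
      = (∑ i ∈ Finset.range (m + 1), s i) + m := by
    intro m
    induction m with
    | zero =>
      simp [Finset.sum_range_succ]
      have := h1 0
      simp at this
      simp [this, h0 0]
    | succ m ih =>
      have e1 : 3*(m+1) + 2 = (3*m+2) + 1 + 1 + 1 := by ring
      rw [e1, Finset.sum_range_succ, Finset.sum_range_succ, Finset.sum_range_succ, ih]
      have a1 : s (3*m+2) = 1 := h2 m
      have a2 : s (3*m+2+1) = 0 := by have := h0 (m+1); rw [← this]; ring_nf
      have a3 : s (3*m+2+1+1) = s (m+1) := by have := h1 (m+1); rw [← this]; ring_nf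
      rw [a1, a2, a3]
      have : ∑ i ∈ Finset.range (m+1+1), s i = (∑ i ∈ Finset.range (m+1), s i) + s (m+1) :=
        Finset.sum_range_succ _ _
      omega
  -- induction on r
  induction r with
  | zero => omega
  | succ r ih =>
    rcases Nat.eq_or_lt_of_le hr with h | h
    · -- r+1 = 1
      have : r = 0 := by omega
      subst this
      norm_num
      have := h1 0
      simp at this
      simp [Finset.sum_range_succ, this, h0 0]
    · have hr' : 1 ≤ r := by omega
      have ihr := ih hr'
      have h3 : 1 ≤ 3^r := Nat.one_le_pow _ _ (by norm_num)
      have hodd : 3^r % 2 = 1 := Nat.pow_mod 3 r 2 ▸ by simp [Nat.pow_mod]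
      -- N_{r+1} = 3*N_r + 1
      have hN : (3^(r+1) - 1)/2 = 3 * ((3^r - 1)/2) + 1 := by
        have : 3^(r+1) = 3 * 3^r := by ring
        omega
      rw [hN]
      have e2 : 3 * ((3^r - 1)/2) + 1 + 1 = 3*((3^r - 1)/2) + 2 := by ring
      rw [e2, key]
      have : 3^(r+1) = 3 * 3^r := by ring
      omega
end

section
/- Let mw(n) be 1 if the number of digit-2's in the base-3 representation of n is odd, and 0 otherwise (the Mephisto Waltz sequence), and let sum_mw(n) = Σ_{i=0}^{n} mw(i). Then for every natural number r, sum_mw((3^{2r} - 1)/2) = (3^{2r} - 1)/4 - r. -/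
/-- The Mephisto Waltz sequence: parity of the number of 2's in the base-3
representation of `n`. -/
def mw (n : ℕ) : ℕ := ((Nat.digits 3 n).count 2) % 2

lemma mw_lt_two (n : ℕ) : mw n < 2 := Nat.mod_lt _ (by norm_num)

lemma mw_step (n : ℕ) (hn : 0 < n) :
    mw n = ((if n % 3 = 2 then 1 else 0) + mw (n / 3)) % 2 := by
  unfold mw
  rw [Nat.digits_def' (by norm_num : 1 < 3) hn, List.count_cons]
  have h : n % 3 = 0 ∨ n % 3 = 1 ∨ n % 3 = 2 := by omega
  rcases h with h | h | h <;> simp [h, Nat.add_mod] <;> ring_nf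

lemma mw_mul3 (q : ℕ) : mw (3 * q) = mw q := by
  rcases Nat.eq_zero_or_pos q with rfl | hq
  · simp
  · rw [mw_step (3 * q) (by positivity)]
    have : (3 * q) % 3 = 0 := by omega
    have h2 : (3 * q) / 3 = q := by omega
    simp [this, h2, mw, Nat.mod_mod]

lemma mw_mul3_add1 (q : ℕ) : mw (3 * q + 1) = mw q := by
  rw [mw_step (3 * q + 1) (by positivity)]
  have : (3 * q + 1) % 3 = 1 := by omega
  have h2 : (3 * q + 1) / 3 = q := by omega
  simp [this, h2, mw, Nat.mod_mod]

lemma mw_mul3_add2 (q : ℕ) : mw (3 * q + 2) = (1 + mw q) % 2 := by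
  rw [mw_step (3 * q + 2) (by positivity)]
  have : (3 * q + 2) % 3 = 2 := by omega
  have h2 : (3 * q + 2) / 3 = q := by omega
  simp [this, h2]

lemma sum_block (m : ℕ) :
    ∑ i ∈ Finset.range (3 * m), mw i = (∑ i ∈ Finset.range m, mw i) + m := by
  induction m with
  | zero => simp
  | succ m ih =>
    have h3 : 3 * (m + 1) = (3 * m + 1) + 1 + 1 := by ring
    rw [h3, Finset.sum_range_succ, Finset.sum_range_succ, Finset.sum_range_succ,
      Finset.sum_range_succ, ih, mw_mul3, mw_mul3_add1, mw_mul3_add2]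
    have := mw_lt_two m
    omega

/-- `(3^k - 1)/2` without subtraction. -/
def rep : ℕ → ℕ
  | 0 => 0
  | k + 1 => 3 * rep k + 1

lemma rep_spec (k : ℕ) : 2 * rep k + 1 = 3 ^ k := by
  induction k with
  | zero => simp [rep]
  | succ k ih => rw [rep, pow_succ]; omega

lemma mw_rep (k : ℕ) : mw (rep k) = 0 := by
  induction k with
  | zero => simp [rep, mw]
  | succ k ih => rw [rep, mw_mul3_add1, ih]

lemma main (k : ℕ) :
    4 * (∑ i ∈ Finset.range (rep k + 1), mw i) + 2 * k + 1 = 3 ^ k := by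
  induction k with
  | zero => simp [rep, mw]
  | succ k ih =>
    have h : rep (k + 1) + 1 = 3 * (rep k + 1) - 1 := by simp [rep]; omega
    have hsum : ∑ i ∈ Finset.range (3 * (rep k + 1)), mw i
        = (∑ i ∈ Finset.range (rep (k + 1) + 1), mw i) + mw (3 * rep k + 2) := by
      have h2 : 3 * (rep k + 1) = (rep (k + 1) + 1) + 1 := by simp [rep]; ring
      rw [h2, Finset.sum_range_succ]
      congr 1
    rw [sum_block] at hsum
    rw [mw_mul3_add2, mw_rep] at hsum
    have h3 : 2 * rep k + 1 = 3 ^ k := rep_spec k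
    have hpow : (3:ℕ) ^ (k + 1) = 3 * 3 ^ k := by rw [pow_succ]; ring
    omega

theorem sum_mephisto_waltz (r : ℕ) :
    4 * (∑ i ∈ Finset.range ((3^(2*r) - 1)/2 + 1), mw i) + 4*r + 1 = 3^(2*r) := by
  have h := main (2 * r)
  have hs := rep_spec (2 * r)
  have : (3 ^ (2 * r) - 1) / 2 = rep (2 * r) := by omega
  rw [this]
  omega
end

section
/- Let bs be the Baum–Sweet sequence and sum_bs(n) = Σ_{i=0}^{n} bs(i). Then for every natural number k, sum_bs(2^k) = 1/2 + (-1)^k/2 + (3√5/10 + 1/2)·φ^k + (−3√5/10 + 1/2)·ψ^k, where φ = (1+√5)/2 and ψ = (1−√5)/2. -/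
private lemma split4 (f : ℕ → ℕ) (m : ℕ) :
    ∑ i ∈ Finset.range (4*m), f i =
      ∑ n ∈ Finset.range (2*m), f (2*n+1) + ∑ n ∈ Finset.range m, f (4*n)
        + ∑ n ∈ Finset.range m, f (4*n+2) := by
  induction m with
  | zero => simp
  | succ m ih =>
    have h1 : 4*(m+1) = (4*m)+1+1+1+1 := by ring
    have h2 : 2*(m+1) = (2*m)+1+1 := by ring
    rw [h1, h2]
    simp only [Finset.sum_range_succ]
    rw [ih]
    have e1 : 2*(2*m)+1 = 4*m+1 := by ring
    have e2 : 2*(2*m+1)+1 = 4*m+1+1+1 := by ring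
    rw [e1, e2]
    ring

private lemma sumA (bs : ℕ → ℕ)
    (h0 : bs 0 = 1)
    (h4 : ∀ n, bs (4*n) = bs n)
    (h42 : ∀ n, bs (4*n + 2) = 0)
    (h1 : ∀ n, bs (2*n + 1) = bs n) :
    ∀ k, (∑ i ∈ Finset.range (2^k), bs i) = Nat.fib (k+2) ∧
      (∑ i ∈ Finset.range (2^(k+1)), bs i) = Nat.fib (k+3) := by
  intro k
  induction k with
  | zero =>
    have hb1 : bs 1 = 1 := by have := h1 0; simpa [h0] using this
    constructor
    · simp [h0]
    · simp [Finset.sum_range_succ, h0, hb1]; decide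
  | succ k ih =>
    refine ⟨ih.2, ?_⟩
    have hpow : 2^(k+2) = 4 * 2^k := by ring
    have hpow2 : 2 * 2^k = 2^(k+1) := by ring
    rw [hpow, split4 bs (2^k), hpow2]
    simp only [h1, h4, h42]
    rw [ih.1, ih.2]
    simp [Nat.fib_add_two]
    omega

private lemma bs2pow (bs : ℕ → ℕ)
    (h0 : bs 0 = 1)
    (h4 : ∀ n, bs (4*n) = bs n)
    (h42 : ∀ n, bs (4*n + 2) = 0)
    (h1 : ∀ n, bs (2*n + 1) = bs n) :
    ∀ k, bs (2^k) = (k+1) % 2 ∧ bs (2^(k+1)) = k % 2 := by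
  intro k
  induction k with
  | zero =>
    have hb1 : bs 1 = 1 := by have := h1 0; simpa [h0] using this
    have hb2 : bs 2 = 0 := by have := h42 0; simpa using this
    exact ⟨by simpa using hb1, by simpa using hb2⟩
  | succ k ih =>
    refine ⟨by rw [ih.2]; omega, ?_⟩
    have hpow : 2^(k+2) = 4 * 2^k := by ring
    rw [hpow, h4, ih.1]

theorem sum_baum_sweet (bs : ℕ → ℕ)
    (h0 : bs 0 = 1)
    (h4 : ∀ n, bs (4*n) = bs n)
    (h42 : ∀ n, bs (4*n + 2) = 0)
    (h1 : ∀ n, bs (2*n + 1) = bs n)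
    (k : ℕ) :
    ((∑ i ∈ Finset.range (2^k + 1), bs i : ℕ) : ℝ) =
      1/2 + (-1 : ℝ)^k/2
        + (3 * Real.sqrt 5 / 10 + 1/2) * ((1 + Real.sqrt 5)/2)^k
        + (-(3 * Real.sqrt 5 / 10) + 1/2) * ((1 - Real.sqrt 5)/2)^k := by
  have hA := (sumA bs h0 h4 h42 h1 k).1
  have hB := (bs2pow bs h0 h4 h42 h1 k).1
  rw [Finset.sum_range_succ, hA, hB]
  have h5 : Real.sqrt 5 ^ 2 = 5 := Real.sq_sqrt (by norm_num)
  have h5pos : (0:ℝ) < Real.sqrt 5 := Real.sqrt_pos.mpr (by norm_num)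
  have hfib : (Nat.fib (k+2) : ℝ) =
      (Real.goldenRatio ^ (k+2) - Real.goldenConj ^ (k+2)) / Real.sqrt 5 := Real.coe_fib_eq _
  have hg : Real.goldenRatio = (1 + Real.sqrt 5)/2 := rfl
  have hc : Real.goldenConj = (1 - Real.sqrt 5)/2 := rfl
  rcases Nat.even_or_odd k with he | ho
  · have hm : (k+1) % 2 = 1 := by
      have := Nat.even_iff.mp he; omega
    rw [hm]
    push_cast
    rw [hfib, hg, hc, Even.neg_one_pow he]
    set s := Real.sqrt 5 with hs
    have ha : ((1+s)/2)^2 = s*(3*s/10+1/2) := by linear_combination (-1/20:ℝ)*h5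
    have hb : ((1-s)/2)^2 = s*(3*s/10-1/2) := by linear_combination (-1/20:ℝ)*h5
    rw [pow_add ((1+s)/2) k 2, pow_add ((1-s)/2) k 2, ha, hb]
    have hsne : s ≠ 0 := ne_of_gt h5pos
    field_simp
    ring
  · have hm : (k+1) % 2 = 0 := by
      have := Nat.odd_iff.mp ho; omega
    rw [hm]
    push_cast
    rw [hfib, hg, hc, Odd.neg_one_pow ho]
    set s := Real.sqrt 5 with hs
    have ha : ((1+s)/2)^2 = s*(3*s/10+1/2) := by linear_combination (-1/20:ℝ)*h5
    have hb : ((1-s)/2)^2 = s*(3*s/10-1/2) := by linear_combination (-1/20:ℝ)*h5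
    rw [pow_add ((1+s)/2) k 2, pow_add ((1-s)/2) k 2, ha, hb]
    have hsne : s ≠ 0 := ne_of_gt h5pos
    field_simp
    ring
end

section
/- Let rs be the Rudin–Shapiro sequence with values in {0,1} and sum_rs(n) = Σ_{i=0}^{n} rs(i). Then for every natural number k ≥ 1: if k is even, sum_rs(2^k - 1) = 2^{k-1} - 2^{k/2 - 1}, and if k is odd, sum_rs(2^k - 1) = 2^{k-1} - 2^{(k-1)/2}. -/
private lemma sum_split_parity (f : ℕ → ℕ) : ∀ N, ∑ i ∈ Finset.range (2*N), f i
    = ∑ n ∈ Finset.range N, f (2*n) + ∑ n ∈ Finset.range N, f (2*n+1) := by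
  intro N
  induction N with
  | zero => simp
  | succ N ih =>
    have h2 : 2 * (N+1) = (2*N + 1) + 1 := by ring
    rw [h2, Finset.sum_range_succ, Finset.sum_range_succ, ih,
      Finset.sum_range_succ, Finset.sum_range_succ]
    omega

theorem sum_rudin_shapiro (rs : ℕ → ℕ)
    (hle : ∀ n, rs n ≤ 1)
    (h0 : rs 0 = 0) (h1 : rs 1 = 0)
    (h2 : ∀ n, rs (2*n) = rs n)
    (h41 : ∀ n, rs (4*n + 1) = rs n)
    (h43 : ∀ n, rs (4*n + 3) = 1 - rs (2*n + 1))
    (k : ℕ) (hk : 1 ≤ k) :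
    (Even k → ∑ i ∈ Finset.range (2^k - 1 + 1), rs i = 2^(k-1) - 2^(k/2 - 1)) ∧
    (Odd k → ∑ i ∈ Finset.range (2^k - 1 + 1), rs i = 2^(k-1) - 2^((k-1)/2)) := by
  set S : ℕ → ℕ := fun m => ∑ i ∈ Finset.range (2^m), rs i with hSdef
  set T : ℕ → ℕ := fun m => ∑ n ∈ Finset.range (2^m), rs (2*n+1) with hTdef
  have hTle : ∀ m, T m ≤ 2^m := by
    intro m
    calc T m ≤ ∑ _n ∈ Finset.range (2^m), 1 := Finset.sum_le_sum (fun i _ => hle _)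
    _ = 2^m := by simp
  have hS : ∀ m, S (m+1) = S m + T m := by
    intro m
    have : (2:ℕ)^(m+1) = 2 * 2^m := by ring
    simp only [hSdef, hTdef, this, sum_split_parity rs]
    congr 1
    exact Finset.sum_congr rfl (fun n _ => h2 n)
  have hT : ∀ m, T (m+1) = S m + (2^m - T m) := by
    intro m
    have h2m : (2:ℕ)^(m+1) = 2 * 2^m := by ring
    have hsplit := sum_split_parity (fun n => rs (2*n+1)) (2^m)
    simp only [hTdef, h2m]
    rw [hsplit]
    have e1 : ∑ n ∈ Finset.range (2^m), rs (2*(2*n)+1) = S m := by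
      apply Finset.sum_congr rfl
      intro n _
      have : 2*(2*n)+1 = 4*n+1 := by ring
      rw [this, h41]
    have e2 : ∑ n ∈ Finset.range (2^m), rs (2*(2*n+1)+1)
        = ∑ n ∈ Finset.range (2^m), (1 - rs (2*n+1)) := by
      apply Finset.sum_congr rfl
      intro n _
      have : 2*(2*n+1)+1 = 4*n+3 := by ring
      rw [this, h43]
    have e3 : ∑ n ∈ Finset.range (2^m), (1 - rs (2*n+1)) = 2^m - T m := by
      have hadd : (∑ n ∈ Finset.range (2^m), (1 - rs (2*n+1))) + T m = 2^m := by
        rw [hTdef, ← Finset.sum_add_distrib]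
        have : ∀ n ∈ Finset.range (2^m), (1 - rs (2*n+1)) + rs (2*n+1) = 1 := by
          intro n _
          have := hle (2*n+1)
          omega
        rw [Finset.sum_congr rfl this]
        simp
      omega
    rw [e1, e2, e3]
  have hS0 : S 0 = 0 := by simp [hSdef, h0]
  have hS1 : S 1 = 0 := by
    simp [hSdef, Finset.sum_range_succ, h0, h1]
  have key : ∀ m, S (m+2) = 2 * S m + 2^m := by
    intro m
    have h4' := hTle m
    rw [show m+2 = (m+1)+1 from rfl, hS (m+1), hT m, hS m]
    omega
  have main : ∀ m, S (2*m+1) = 2^(2*m) - 2^m ∧ S (2*m+2) = 2^(2*m+1) - 2^m := by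
    intro m
    induction m with
    | zero =>
      constructor
      · simpa using hS1
      · have := key 0
        simp [hS0] at this
        simpa using this
    | succ m ih =>
      obtain ⟨ih1, ih2⟩ := ih
      have k1 := key (2*m+1)
      have k2 := key (2*m+2)
      rw [ih1] at k1
      rw [ih2] at k2
      have pb : (2:ℕ)^m ≤ 2^(2*m) := Nat.pow_le_pow_right (by norm_num) (by omega)
      have p1 : (2:ℕ)^(2*m+1) = 2 * 2^(2*m) := by ring
      have p2 : (2:ℕ)^(2*m+2) = 4 * 2^(2*m) := by ring
      have p3 : (2:ℕ)^(2*(m+1)) = 4 * 2^(2*m) := by rw [show 2*(m+1) = 2*m+2 by ring]; ring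
      have p4 : (2:ℕ)^(2*(m+1)+1) = 8 * 2^(2*m) := by rw [show 2*(m+1)+1 = 2*m+3 by ring]; ring
      have p5 : (2:ℕ)^(m+1) = 2 * 2^m := by ring
      constructor
      · rw [show 2*(m+1)+1 = 2*m+1+2 by ring, k1]
        omega
      · rw [show 2*(m+1)+2 = 2*m+2+2 by ring, k2]
        omega
  have hrange : 2^k - 1 + 1 = 2^k := by
    have : 1 ≤ 2^k := Nat.one_le_two_pow
    omega
  rw [hrange]
  constructor
  · intro hev
    obtain ⟨m, hm⟩ : ∃ m, k = 2*m+2 := by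
      obtain ⟨j, hj⟩ := hev
      have : 1 ≤ j := by omega
      exact ⟨j-1, by omega⟩
    subst hm
    have := (main m).2
    have e1 : 2*m+2-1 = 2*m+1 := by omega
    have e2 : (2*m+2)/2 - 1 = m := by omega
    rw [e1, e2]
    exact this
  · intro hod
    obtain ⟨m, hm⟩ := hod
    subst hm
    have := (main m).1
    have e1 : 2*m+1-1 = 2*m := by omega
    have e2 : (2*m)/2 = m := by omega
    rw [e1, e2]
    exact this
end

section
/- For every natural number r ≥ 1, if n has Zeckendorf (Fibonacci) representation (100100)^r, i.e., n = Σ_{j=0}^{r-1} (F(6j+4) + F(6j+7)), then n = (F(6r+8) - 5·F(6r+2) - 16)/16. -/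
theorem zeckendorf_100100_value (r : ℕ) (hr : 1 ≤ r) :
    16 * (∑ j ∈ Finset.range r, (Nat.fib (6*j + 4) + Nat.fib (6*j + 7)))
      + 5 * Nat.fib (6*r + 2) + 16 = Nat.fib (6*r + 8) := by
  clear hr
  induction r with
  | zero => simp [Nat.fib]
  | succ n ih =>
    rw [Finset.sum_range_succ,
      show 6*(n+1)+2 = 6*n+8 by ring, show 6*(n+1)+8 = 6*n+14 by ring]
    have e : ∀ k, Nat.fib (6*n + k + 2) = Nat.fib (6*n + k) + Nat.fib (6*n + k + 1) :=
      fun k => Nat.fib_add_two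
    have e2 := e 2; have e3 := e 3; have e4 := e 4; have e5 := e 5
    have e6 := e 6; have e7 := e 7; have e8 := e 8; have e9 := e 9
    have e10 := e 10; have e11 := e 11; have e12 := e 12
    simp only [Nat.add_assoc] at e2 e3 e4 e5 e6 e7 e8 e9 e10 e11 e12
    norm_num at e2 e3 e4 e5 e6 e7 e8 e9 e10 e11 e12
    omega
end
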